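/- arXiv:1908.03801 — 3 statements merged into one kernel-verified Lean document; each statement's English description precedes it below -/
import Mathlib

section
/- Let Γ be a finitely generated group and γ_1, γ_2 ∈ Γ. Then the following are equivalent: (i) for every finite group G and every g ∈ G, the number of homomorphisms φ : Γ → G with φ(γ_1) = g equals the number with φ(γ_2) = g; (ii) for every finite group G and every g ∈ G, the number of surjective homomorphisms φ : Γ → G with φ(γ_1) = g equals the number of surjective homomorphisms with φ(γ_2) = g. -/
/-!
Every homomorphism `Γ → G` is a surjection onto its image `H ≤ G`, so the number of
homomorphisms sending `γ` to `g` is the sum, over the subgroups `H` containing `g`, of the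
number of surjections `Γ → H` sending `γ` to `g`. Hence (ii) gives (i) termwise, and
conversely, by strong induction on `|G|`, all terms with `H` proper agree, which leaves the
equality of the terms `H = G`.
-/

open Function

section Counting

variable {Γ G : Type*} [Group Γ] [Group G]

instance MonoidHom.finite_of_fg [Group.FG Γ] [Finite G] : Finite (Γ →* G) := by
  obtain ⟨α, hα, φ, hφ⟩ := Group.fg_iff_exists_freeGroup_hom_surjective_finite.mp ‹Group.FG Γ›
  have : Finite (FreeGroup α →* G) := .of_equiv _ FreeGroup.lift
  exact .of_injective (fun ψ => ψ.comp φ) fun _ _ h => (MonoidHom.cancel_right hφ).mp h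

theorem MonoidHom.range_subtype_comp {H : Subgroup G} {ψ : Γ →* H} (hψ : Surjective ψ) :
    (H.subtype.comp ψ).range = H := by
  rw [MonoidHom.range_comp, MonoidHom.range_eq_top.mpr hψ, ← MonoidHom.range_eq_map,
    Subgroup.range_subtype]

noncomputable def MonoidHom.sigmaSurjectiveEquiv (γ : Γ) (g : G) :
    (Σ H : Subgroup G, {ψ : Γ →* H // Surjective ψ ∧ (ψ γ : G) = g}) ≃
      {φ : Γ →* G // φ γ = g} :=
  Equiv.ofBijective (fun x => ⟨x.1.subtype.comp x.2.1, x.2.2.2⟩) <| by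
    refine ⟨?_, fun ⟨φ, hφ⟩ => ⟨⟨φ.range, φ.rangeRestrict, φ.rangeRestrict_surjective, hφ⟩, rfl⟩⟩
    rintro ⟨H₁, ψ₁, hψ₁, _⟩ ⟨H₂, ψ₂, hψ₂, _⟩ hφ
    have hcomp : H₁.subtype.comp ψ₁ = H₂.subtype.comp ψ₂ := congrArg Subtype.val hφ
    obtain rfl : H₁ = H₂ := by
      rw [← MonoidHom.range_subtype_comp hψ₁, ← MonoidHom.range_subtype_comp hψ₂, hcomp]
    obtain rfl : ψ₁ = ψ₂ := (MonoidHom.cancel_left H₁.subtype_injective).mp hcomp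
    rfl

theorem card_hom_eq_sum_card_surjective [Group.FG Γ] [Finite G] [Fintype (Subgroup G)]
    (γ : Γ) (g : G) :
    Nat.card {φ : Γ →* G // φ γ = g} =
      ∑ H : Subgroup G, Nat.card {ψ : Γ →* H // Surjective ψ ∧ (ψ γ : G) = g} := by
  rw [← Nat.card_congr (MonoidHom.sigmaSurjectiveEquiv γ g), Nat.card_sigma]

theorem card_surjective_congr {K : Type*} [Group K] (e : G ≃* K) (γ : Γ) (g : G) :
    Nat.card {ψ : Γ →* G // Surjective ψ ∧ ψ γ = g} =
      Nat.card {ψ : Γ →* K // Surjective ψ ∧ ψ γ = e g} :=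
  Nat.card_congr <| (MulEquiv.monoidHomCongrRightEquiv e).subtypeEquiv fun ψ => by
    simp [Surjective.of_comp_iff' e.bijective, e.injective.eq_iff]

theorem card_surjective_subgroup_of_mem {H : Subgroup G} (γ : Γ) {g : G} (hg : g ∈ H) :
    Nat.card {ψ : Γ →* H // Surjective ψ ∧ (ψ γ : G) = g} =
      Nat.card {ψ : Γ →* H // Surjective ψ ∧ ψ γ = ⟨g, hg⟩} :=
  Nat.card_congr <| Equiv.subtypeEquivRight fun ψ => by rw [Subtype.ext_iff]

theorem card_surjective_subgroup_of_notMem {H : Subgroup G} (γ : Γ) {g : G} (hg : g ∉ H) :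
    Nat.card {ψ : Γ →* H // Surjective ψ ∧ (ψ γ : G) = g} = 0 := by
  have : IsEmpty {ψ : Γ →* H // Surjective ψ ∧ (ψ γ : G) = g} :=
    ⟨fun ⟨ψ, _, hψ⟩ => hg (hψ ▸ (ψ γ).2)⟩
  exact Nat.card_of_isEmpty

theorem card_surjective_top (γ : Γ) (g : G) :
    Nat.card {ψ : Γ →* (⊤ : Subgroup G) // Surjective ψ ∧ (ψ γ : G) = g} =
      Nat.card {φ : Γ →* G // Surjective φ ∧ φ γ = g} := by
  rw [card_surjective_subgroup_of_mem γ (Subgroup.mem_top g),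
    card_surjective_congr Subgroup.topEquiv]
  rfl

theorem card_surjective_subgroup_eq_of_card_surjective_eq {γ₁ γ₂ : Γ} {H : Subgroup G}
    (h : ∀ x : H, Nat.card {ψ : Γ →* H // Surjective ψ ∧ ψ γ₁ = x} =
      Nat.card {ψ : Γ →* H // Surjective ψ ∧ ψ γ₂ = x}) (g : G) :
    Nat.card {ψ : Γ →* H // Surjective ψ ∧ (ψ γ₁ : G) = g} =
      Nat.card {ψ : Γ →* H // Surjective ψ ∧ (ψ γ₂ : G) = g} := by
  by_cases hg : g ∈ H
  · rw [card_surjective_subgroup_of_mem γ₁ hg, card_surjective_subgroup_of_mem γ₂ hg]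
    exact h ⟨g, hg⟩
  · rw [card_surjective_subgroup_of_notMem γ₁ hg, card_surjective_subgroup_of_notMem γ₂ hg]

end Counting

section Equivalence

variable {Γ : Type*} [Group Γ]

theorem card_hom_eq_of_card_surjective_eq [Group.FG Γ] {γ₁ γ₂ : Γ}
    (h : ∀ (G : Type) [Group G] [Finite G] (g : G),
      Nat.card {φ : Γ →* G // Surjective φ ∧ φ γ₁ = g} =
        Nat.card {φ : Γ →* G // Surjective φ ∧ φ γ₂ = g})
    (G : Type) [Group G] [Finite G] (g : G) :
    Nat.card {φ : Γ →* G // φ γ₁ = g} = Nat.card {φ : Γ →* G // φ γ₂ = g} := by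
  have := Fintype.ofFinite (Subgroup G)
  rw [card_hom_eq_sum_card_surjective, card_hom_eq_sum_card_surjective]
  exact Finset.sum_congr rfl fun H _ =>
    card_surjective_subgroup_eq_of_card_surjective_eq (h H) g

theorem card_surjective_eq_of_card_hom_eq [Group.FG Γ] {γ₁ γ₂ : Γ}
    (h : ∀ (G : Type) [Group G] [Finite G] (g : G),
      Nat.card {φ : Γ →* G // φ γ₁ = g} = Nat.card {φ : Γ →* G // φ γ₂ = g})
    (G : Type) [Group G] [Finite G] (g : G) :
    Nat.card {φ : Γ →* G // Surjective φ ∧ φ γ₁ = g} =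
      Nat.card {φ : Γ →* G // Surjective φ ∧ φ γ₂ = g} := by
  induction hn : Nat.card G using Nat.strong_induction_on generalizing G with
  | _ n ih =>
    classical
    have := Fintype.ofFinite (Subgroup G)
    have hproper (H : Subgroup G) (hH : H ≠ ⊤) :
        Nat.card {ψ : Γ →* H // Surjective ψ ∧ (ψ γ₁ : G) = g} =
          Nat.card {ψ : Γ →* H // Surjective ψ ∧ (ψ γ₂ : G) = g} := by
      have hlt : Nat.card H < n :=
        hn ▸ H.card_le_card_group.lt_of_ne (mt H.card_eq_iff_eq_top.mp hH)
      exact card_surjective_subgroup_eq_of_card_surjective_eq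
        (fun x => ih _ hlt H x rfl) g
    have hsum := h G g
    rw [card_hom_eq_sum_card_surjective, card_hom_eq_sum_card_surjective,
      Fintype.sum_eq_add_sum_compl ⊤, Fintype.sum_eq_add_sum_compl ⊤,
      Finset.sum_congr rfl fun H hH =>
        hproper H (Finset.notMem_singleton.mp (Finset.mem_compl.mp hH))] at hsum
    rw [← card_surjective_top, ← card_surjective_top]
    exact Nat.add_right_cancel hsum

end Equivalence

/-- For a finitely generated group `Γ` and `γ₁ γ₂ : Γ`, the following are equivalent:
(i) for every finite group `G` and `g : G`, the number of homomorphisms `φ : Γ →* G`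
with `φ γ₁ = g` equals the number with `φ γ₂ = g`;
(ii) the same with homomorphisms replaced by surjective homomorphisms. -/
theorem sameMeasure_iff_sameEpiMeasure
    (Γ : Type) [Group Γ] [Group.FG Γ] (γ₁ γ₂ : Γ) :
    (∀ (G : Type) [Group G] [Finite G] (g : G),
        Nat.card {φ : Γ →* G // φ γ₁ = g} = Nat.card {φ : Γ →* G // φ γ₂ = g}) ↔
    (∀ (G : Type) [Group G] [Finite G] (g : G),
        Nat.card {φ : Γ →* G // Function.Surjective φ ∧ φ γ₁ = g} =
          Nat.card {φ : Γ →* G // Function.Surjective φ ∧ φ γ₂ = g}) :=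
  ⟨card_surjective_eq_of_card_hom_eq, card_hom_eq_of_card_surjective_eq⟩
end

section
/- Let Γ be a finitely generated group and γ_1, γ_2 ∈ Γ. Suppose that for every finite group G, the sets of possible images under surjections coincide: {φ(γ_1) : φ ∈ Epi(Γ,G)} = {φ(γ_2) : φ ∈ Epi(Γ,G)}. Then for every finite group G, writing K = K_Γ(G), there exists an automorphism of Γ/K mapping γ_1K to γ_2K. -/
/-!
Let `K = K_Γ(G)`. By hypothesis some surjection `ψ : Γ → Γ/K` sends `γ₁` to `γ₂ K`.
Composing with the surjections `Γ/K → G` shows `ψ(K) ⊆ K_{Γ/K}(G)`, which is trivial, so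
`ψ` descends to a surjective, hence bijective, endomorphism of the finite group `Γ/K`.
-/

/-- `Kgrp Γ G` is the intersection of all normal subgroups `N ◁ Γ` with `Γ/N ≅ G`
(equivalently, of the kernels of all surjective homomorphisms `Γ →* G`); it equals
`Γ` if `G` is not a quotient of `Γ`. -/
def Kgrp (Γ : Type) [Group Γ] (G : Type) [Group G] : Subgroup Γ :=
  ⨅ (φ : Γ →* G) (_ : Function.Surjective φ), φ.ker

instance Kgrp_normal (Γ : Type) [Group Γ] (G : Type) [Group G] : (Kgrp Γ G).Normal := by
  constructor
  intro n hn g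
  simp only [Kgrp, Subgroup.mem_iInf] at hn ⊢
  intro φ hφ
  have h1 := hn φ hφ
  simp only [MonoidHom.mem_ker] at h1 ⊢
  simp [map_mul, h1]

theorem finite_monoidHom_of_fg (Γ G : Type*) [Group Γ] [Group.FG Γ] [Monoid G] [Finite G] :
    Finite (Γ →* G) := by
  obtain ⟨S, hS, hSfin⟩ := Group.fg_iff.mp ‹Group.FG Γ›
  have : Finite S := hSfin
  refine Finite.of_injective (fun φ : Γ →* G => fun s : S => φ s) fun φ ψ hφψ => ?_
  exact MonoidHom.eq_of_eqOn_dense hS fun x hx => congrFun hφψ ⟨x, hx⟩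

section Kgrp

variable {Γ : Type} [Group Γ] {G : Type} [Group G]

theorem Kgrp_le_ker {φ : Γ →* G} (hφ : Function.Surjective φ) : Kgrp Γ G ≤ φ.ker :=
  iInf₂_le φ hφ

theorem mem_Kgrp_iff {x : Γ} :
    x ∈ Kgrp Γ G ↔ ∀ φ : Γ →* G, Function.Surjective φ → φ x = 1 := by
  simp only [Kgrp, Subgroup.mem_iInf, MonoidHom.mem_ker]

theorem Kgrp_le_comap_of_surjective {Γ' : Type} [Group Γ'] {ψ : Γ →* Γ'}
    (hψ : Function.Surjective ψ) : Kgrp Γ G ≤ (Kgrp Γ' G).comap ψ := fun _ hx =>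
  mem_Kgrp_iff.mpr fun φ hφ => Kgrp_le_ker (φ := φ.comp ψ) (hφ.comp hψ) hx

theorem Kgrp_quotient_Kgrp_eq_bot : Kgrp (Γ ⧸ Kgrp Γ G) G = ⊥ := by
  refine (Subgroup.eq_bot_iff_forall _).mpr fun x hx => ?_
  induction x using QuotientGroup.induction_on with | H y => ?_
  refine (QuotientGroup.eq_one_iff y).mpr (mem_Kgrp_iff.mpr fun φ hφ => ?_)
  exact mem_Kgrp_iff.mp hx _
    (QuotientGroup.lift_surjective_of_surjective _ φ hφ (Kgrp_le_ker hφ))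

theorem Kgrp_le_ker_of_surjective_onto_quotient {ψ : Γ →* Γ ⧸ Kgrp Γ G}
    (hψ : Function.Surjective ψ) : Kgrp Γ G ≤ ψ.ker := by
  have := Kgrp_le_comap_of_surjective (G := G) hψ
  rwa [Kgrp_quotient_Kgrp_eq_bot, MonoidHom.comap_bot] at this

theorem finiteIndex_Kgrp [Group.FG Γ] [Finite G] : (Kgrp Γ G).FiniteIndex := by
  have := finite_monoidHom_of_fg Γ G
  refine Subgroup.finiteIndex_iInf fun φ => ?_
  by_cases hφ : Function.Surjective φ
  · rw [iInf_pos hφ]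
    infer_instance
  · rw [iInf_neg hφ]
    infer_instance

end Kgrp

/-- Let `Γ` be a finitely generated group and `γ₁, γ₂ ∈ Γ`.  If for every finite group
`G` the sets of possible images of `γ₁` and `γ₂` under surjections `Γ → G` coincide,
then for every finite group `G` there is an automorphism of `Γ / K_Γ(G)` mapping
`γ₁ K` to `γ₂ K`. -/
theorem autEquiv_in_quotient_of_same_epi_images
    (Γ : Type) [Group Γ] [Group.FG Γ] (γ₁ γ₂ : Γ)
    (h : ∀ (G : Type) [Group G] [Finite G],
      {g : G | ∃ φ : Γ →* G, Function.Surjective φ ∧ φ γ₁ = g} =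
        {g : G | ∃ φ : Γ →* G, Function.Surjective φ ∧ φ γ₂ = g}) :
    ∀ (G : Type) [Group G] [Finite G],
      ∃ θ : MulAut (Γ ⧸ Kgrp Γ G),
        θ (QuotientGroup.mk γ₁) = QuotientGroup.mk γ₂ := by
  intro G _ _
  have := finiteIndex_Kgrp (Γ := Γ) (G := G)
  obtain ⟨ψ, hψ, hψγ⟩ : (QuotientGroup.mk γ₂ : Γ ⧸ Kgrp Γ G) ∈
      {g | ∃ φ : Γ →* Γ ⧸ Kgrp Γ G, Function.Surjective φ ∧ φ γ₁ = g} := by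
    rw [h]
    exact ⟨QuotientGroup.mk' _, QuotientGroup.mk'_surjective _, rfl⟩
  let θ := QuotientGroup.lift _ ψ (Kgrp_le_ker_of_surjective_onto_quotient hψ)
  have hθ : Function.Surjective θ := QuotientGroup.lift_surjective_of_surjective _ ψ hψ _
  exact ⟨MulEquiv.ofBijective θ ⟨Finite.injective_iff_surjective.mpr hθ, hθ⟩, hψγ⟩
end

section
/- Let b, t ∈ ℤ_{≥1} with b | t, let N ≥ 2bt, and let σ ∈ S_N be a uniformly random permutation. Then E[c_t(σ^b)] = 1/t and E[c_t(σ^b)^2] = b/t + 1/t^2. -/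
/-- `cycleCount σ t` is the number of `t`-cycles in the cycle decomposition of the
permutation `σ` (for `t = 1` this counts the fixed points): the cycles of length `t`
correspond to the `⟨σ⟩`-orbits of size `t`, each of which contains `t` points. -/
noncomputable def cycleCount {N : ℕ} (σ : Equiv.Perm (Fin N)) (t : ℕ) : ℕ :=
  Nat.card {x : Fin N // Nat.card {y : Fin N // σ.SameCycle x y} = t} / t

/-!
Put `c = t * b`. As `b ∣ t`, a point lies on a `t`-cycle of `σ ^ b` exactly when it lies on a
`c`-cycle of `σ`, so `t * cycleCount (σ ^ b) t` is the number `K σ` of points on `c`-cycles of `σ`.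
A point `x` on a `c`-cycle is the same datum as an embedding `F : ZMod c ↪ α` with
`σ ∘ F = F ∘ (1 + ·)` (take `x = F 0`), and an ordered pair of points on distinct `c`-cycles is
such an embedding of `ZMod c ⊕ ZMod c`. For any permutation `π` of `ι` with `|ι| ≤ N`, the pairs
`(σ, F)` with `σ ∘ F = F ∘ π` number exactly `N!`: since `Perm α` acts transitively on `ι ↪ α`,
every `F` admits `|Stab F| = N! / #(ι ↪ α)` such `σ`. Hence `∑ K = N!`, and as
`K ^ 2 = c * K + #(pairs on distinct c-cycles)`, also `∑ K ^ 2 = (c + 1) * N!`.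
-/

open Equiv Function

namespace MulAction

variable {G X : Type*} [Group G] [MulAction G X] [IsPretransitive G X]

theorem card_smul_eq_mul_card [Finite X] (a b : X) :
    Nat.card {g : G // g • a = b} * Nat.card X = Nat.card G := by
  obtain ⟨g₀, rfl⟩ := exists_smul_eq G a b
  have hcoset : {g : G // g • a = g₀ • a} ≃ stabilizer G a :=
    (Equiv.mulLeft g₀⁻¹).subtypeEquiv fun g => by simp [mul_smul, inv_smul_eq_iff]
  rw [Nat.card_congr hcoset, ← (stabilizer G a).card_mul_index, index_stabilizer,
    orbit_eq_univ, Set.ncard_univ, mul_comm]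

theorem sum_card_smul_eq_apply [Fintype G] [Finite X] [Nonempty X] (f : X → X) :
    ∑ g : G, Nat.card {x : X // g • x = f x} = Nat.card G := by
  classical
  have := Fintype.ofFinite X
  have hswap : ∑ g : G, Nat.card {x : X // g • x = f x} =
      ∑ x : X, Nat.card {g : G // g • x = f x} := by
    simp only [Nat.card_eq_fintype_card, Fintype.card_subtype, Finset.card_filter]
    exact Finset.sum_comm
  apply Nat.eq_of_mul_eq_mul_right (Nat.card_pos (α := X))
  rw [hswap, Finset.sum_mul, Finset.sum_congr rfl fun x _ => card_smul_eq_mul_card x (f x),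
    Finset.sum_const, Finset.card_univ, smul_eq_mul, Nat.card_eq_fintype_card (α := X),
    mul_comm]

end MulAction

theorem Function.Semiconj.minimalPeriod_eq_of_injective {α β : Type*} {F : β → α}
    {f : α → α} {g : β → β} (h : Semiconj F g f) (hF : Injective F) (i : β) :
    minimalPeriod f (F i) = minimalPeriod g i := by
  rw [minimalPeriod_eq_minimalPeriod_iff]
  intro n
  simp only [IsPeriodicPt, IsFixedPt, ← h.iterate_right n i, hF.eq_iff]

theorem Function.Semiconj.comp_inl {ι κ α : Type*} {F : ι ⊕ κ → α} {π : ι → ι} {ρ : κ → κ}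
    {f : α → α} (h : Semiconj F (Sum.map π ρ) f) : Semiconj (F ∘ Sum.inl) π f :=
  fun i => h (.inl i)

theorem Function.Semiconj.comp_inr {ι κ α : Type*} {F : ι ⊕ κ → α} {π : ι → ι} {ρ : κ → κ}
    {f : α → α} (h : Semiconj F (Sum.map π ρ) f) : Semiconj (F ∘ Sum.inr) ρ f :=
  fun i => h (.inr i)

theorem Setoid.dvd_card_of_forall_card_eq {β : Type*} [Finite β] (r : Setoid β) {c : ℕ}
    (h : ∀ x, Nat.card {y // r x y} = c) : c ∣ Nat.card β := by
  classical
  have := Fintype.ofFinite β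
  rw [← Nat.card_congr (Equiv.sigmaFiberEquiv (Quotient.mk r)), Nat.card_sigma]
  refine Finset.dvd_sum fun q _ => ?_
  induction q using Quotient.inductionOn with
  | h x =>
    rw [← h x]
    exact dvd_of_eq (Nat.card_congr (Equiv.subtypeEquivRight fun y =>
      ⟨fun h => Quotient.sound (r.symm h), fun h => r.symm (Quotient.exact h)⟩))

namespace Equiv.Perm

variable {α : Type*}

theorem sum_card_semiconj_embedding {ι : Type*} [Fintype ι] [Fintype α] [DecidableEq α]
    (π : Perm ι) (h : Fintype.card ι ≤ Fintype.card α) :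
    ∑ σ : Perm α, Nat.card {F : ι ↪ α // Semiconj F π σ} = (Fintype.card α).factorial := by
  have : MulAction.IsPretransitive (Perm α) (ι ↪ α) := ⟨exists_smul_eq_embedding⟩
  have : Nonempty (ι ↪ α) := Function.Embedding.nonempty_of_card_le h
  have hsemiconj (σ : Perm α) (F : ι ↪ α) :
      Semiconj F π σ ↔ σ • F = π.toEmbedding.trans F := by
    simp [Semiconj, Function.Embedding.ext_iff, eq_comm]
  simp_rw [hsemiconj]
  rw [MulAction.sum_card_smul_eq_apply, Nat.card_perm, Nat.card_eq_fintype_card]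

theorem card_sameCycle (σ : Perm α) (x : α) :
    Nat.card {y // σ.SameCycle x y} = minimalPeriod σ x := by
  have hmem (y : α) : y ∈ MulAction.orbit (Subgroup.zpowers σ) x ↔ σ.SameCycle x y := by
    simp only [MulAction.mem_orbit_iff, Subgroup.exists_zpowers]
    rfl
  rw [← Nat.card_congr (Equiv.subtypeEquivRight hmem),
    Nat.card_congr (MulAction.orbitZPowersEquiv σ x), Nat.card_zmod]
  rfl

theorem SameCycle.minimalPeriod_eq {σ : Perm α} {x y : α} (h : σ.SameCycle x y) :
    minimalPeriod σ x = minimalPeriod σ y := by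
  rw [← card_sameCycle, ← card_sameCycle]
  exact Nat.card_congr (Equiv.subtypeEquivRight fun z => ⟨h.symm.trans, h.trans⟩)

theorem card_sameCycle_of_minimalPeriod_eq {c : ℕ} (σ : Perm α)
    (x : {x // minimalPeriod σ x = c}) :
    Nat.card {y : {x // minimalPeriod σ x = c} // σ.SameCycle x y} = c := by
  obtain ⟨x, rfl⟩ := x
  exact (Nat.card_congr (Equiv.subtypeSubtypeEquivSubtype fun h =>
    h.minimalPeriod_eq.symm)).trans (card_sameCycle σ x)

theorem dvd_card_minimalPeriod_eq [Finite α] (σ : Perm α) (c : ℕ) :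
    c ∣ Nat.card {x // minimalPeriod σ x = c} :=
  Setoid.dvd_card_of_forall_card_eq ((SameCycle.setoid σ).comap Subtype.val)
    (card_sameCycle_of_minimalPeriod_eq σ)

theorem minimalPeriod_pow_eq_iff [Finite α] {σ : Perm α} {x : α} {b t : ℕ} (ht : 0 < t)
    (hbt : b ∣ t) : minimalPeriod ⇑(σ ^ b) x = t ↔ minimalPeriod σ x = t * b := by
  have hb : 0 < b := Nat.pos_of_dvd_of_pos hbt ht
  rw [coe_pow, minimalPeriod_iterate_eq_div_gcd' (σ.injective.mem_periodicPts x)]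
  constructor
  · intro h
    have hp : minimalPeriod σ x = t * (minimalPeriod σ x).gcd b := by
      rw [← h, Nat.div_mul_cancel (Nat.gcd_dvd_left _ _)]
    rwa [Nat.gcd_eq_right (hp ▸ hbt.mul_right _)] at hp
  · intro h
    rw [h, Nat.gcd_eq_right (dvd_mul_left b t), Nat.mul_div_cancel _ hb]

section ZModOrbit

variable {c : ℕ} {σ : Perm α} {x : α}

/-- Meaningful when `minimalPeriod σ x = c`: it is then an injective, `σ`-equivariant
parametrisation of the cycle through `x`. -/
def zmodOrbit (σ : Perm α) (c : ℕ) (x : α) (i : ZMod c) : α := (σ ^ i.val) x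

theorem zmodOrbit_zero : zmodOrbit σ c x 0 = x := by
  simp [zmodOrbit]

theorem sameCycle_zmodOrbit (i : ZMod c) : σ.SameCycle x (zmodOrbit σ c x i) :=
  sameCycle_pow_right.2 (SameCycle.refl σ x)

theorem zmodOrbit_natCast (hx : minimalPeriod σ x = c) (n : ℕ) :
    zmodOrbit σ c x n = (σ ^ n) x := by
  simp only [zmodOrbit, ZMod.val_natCast, coe_pow, ← hx, iterate_mod_minimalPeriod_eq]

theorem zmodOrbit_semiconj [NeZero c] (hx : minimalPeriod σ x = c) :
    Semiconj (zmodOrbit σ c x) (Equiv.addLeft 1) σ := by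
  intro i
  have h := zmodOrbit_natCast hx (1 + i.val)
  rw [Nat.cast_add, Nat.cast_one, ZMod.natCast_zmod_val, pow_add, pow_one, mul_apply] at h
  rw [coe_addLeft, h, ← zmodOrbit_natCast hx, ZMod.natCast_zmod_val]

theorem zmodOrbit_injective [NeZero c] (hx : minimalPeriod σ x = c) :
    Injective (zmodOrbit σ c x) := by
  intro i j h
  apply ZMod.val_injective
  refine iterate_injOn_Iio_minimalPeriod (f := σ) ?_ ?_
    (by simpa only [zmodOrbit, coe_pow] using h)
  · simp [hx, ZMod.val_lt]
  · simp [hx, ZMod.val_lt]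

variable {F : ZMod c → α}

theorem apply_natCast_of_semiconj (hF : Semiconj F (Equiv.addLeft 1) σ) (n : ℕ) :
    F n = (σ ^ n) (F 0) := by
  simpa [add_left_iterate, coe_pow] using hF.iterate_right n 0

theorem minimalPeriod_eq_of_semiconj (hF : Semiconj F (Equiv.addLeft 1) σ) (hinj : Injective F) :
    minimalPeriod σ (F 0) = c :=
  (hF.minimalPeriod_eq_of_injective hinj 0).trans (ZMod.addOrderOf_one c)

theorem eq_zmodOrbit_of_semiconj [NeZero c] (hF : Semiconj F (Equiv.addLeft 1) σ)
    (hinj : Injective F) : F = zmodOrbit σ c (F 0) :=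
  funext fun i => by
    rw [← ZMod.natCast_zmod_val i, apply_natCast_of_semiconj hF,
      zmodOrbit_natCast (minimalPeriod_eq_of_semiconj hF hinj)]

variable (σ c) [NeZero c]

theorem card_semiconj_zmod_embedding :
    Nat.card {F : ZMod c ↪ α // Semiconj F (Equiv.addLeft 1) σ} =
      Nat.card {x // minimalPeriod σ x = c} :=
  Nat.card_congr
    { toFun F := ⟨F.1 0, minimalPeriod_eq_of_semiconj F.2 F.1.injective⟩
      invFun x := ⟨⟨zmodOrbit σ c x, zmodOrbit_injective x.2⟩, zmodOrbit_semiconj x.2⟩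
      left_inv F := Subtype.ext <| DFunLike.coe_injective
        (eq_zmodOrbit_of_semiconj F.2 F.1.injective).symm
      right_inv _ := Subtype.ext zmodOrbit_zero }

theorem card_semiconj_zmod_sum_embedding [Finite α] :
    Nat.card {F : ZMod c ⊕ ZMod c ↪ α //
        Semiconj F (sumCongr (Equiv.addLeft 1) (Equiv.addLeft 1)) σ} =
      Nat.card {p : {x // minimalPeriod σ x = c} × {x // minimalPeriod σ x = c} //
        ¬σ.SameCycle p.1 p.2} :=
  Nat.card_congr
    { toFun F :=
        ⟨(⟨F.1 (.inl 0), minimalPeriod_eq_of_semiconj F.2.comp_inl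
            (F.1.injective.comp Sum.inl_injective)⟩,
          ⟨F.1 (.inr 0), minimalPeriod_eq_of_semiconj F.2.comp_inr
            (F.1.injective.comp Sum.inr_injective)⟩),
          fun h => by
            obtain ⟨n, hn⟩ := h.exists_nat_pow_eq
            exact Sum.inl_ne_inr
              (F.1.injective ((apply_natCast_of_semiconj F.2.comp_inl n).trans hn))⟩
      invFun p :=
        ⟨⟨Sum.elim (zmodOrbit σ c p.1.1) (zmodOrbit σ c p.1.2),
          (zmodOrbit_injective p.1.1.2).sumElim (zmodOrbit_injective p.1.2.2) fun i j h =>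
            p.2 ((sameCycle_zmodOrbit i).trans (h ▸ (sameCycle_zmodOrbit j).symm))⟩,
          by rintro (i | i); exacts [zmodOrbit_semiconj p.1.1.2 i, zmodOrbit_semiconj p.1.2.2 i]⟩
      left_inv F := by
        refine Subtype.ext <| DFunLike.ext _ _ ?_
        rintro (i | i)
        · exact (congrFun (eq_zmodOrbit_of_semiconj F.2.comp_inl
            (F.1.injective.comp Sum.inl_injective)) i).symm
        · exact (congrFun (eq_zmodOrbit_of_semiconj F.2.comp_inr
            (F.1.injective.comp Sum.inr_injective)) i).symm
      right_inv _ := Subtype.ext (Prod.ext (Subtype.ext zmodOrbit_zero)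
        (Subtype.ext zmodOrbit_zero)) }

end ZModOrbit

theorem sum_card_minimalPeriod_eq [Fintype α] [DecidableEq α] {c : ℕ} (hc : 0 < c)
    (hcα : c ≤ Fintype.card α) :
    ∑ σ : Perm α, Nat.card {x // minimalPeriod σ x = c} = (Fintype.card α).factorial := by
  have : NeZero c := ⟨hc.ne'⟩
  simp_rw [← card_semiconj_zmod_embedding]
  exact sum_card_semiconj_embedding _ (by rwa [ZMod.card])

theorem sq_card_minimalPeriod_eq [Finite α] (σ : Perm α) (c : ℕ) :
    Nat.card {x // minimalPeriod σ x = c} ^ 2 = c * Nat.card {x // minimalPeriod σ x = c} +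
      Nat.card {p : {x // minimalPeriod σ x = c} × {x // minimalPeriod σ x = c} //
        ¬σ.SameCycle p.1 p.2} := by
  classical
  have := Fintype.ofFinite {x // minimalPeriod σ x = c}
  rw [sq, ← Nat.card_prod, ← Nat.card_congr (Equiv.sumCompl
      fun p : {x // minimalPeriod σ x = c} × {x // minimalPeriod σ x = c} => σ.SameCycle p.1 p.2),
    Nat.card_sum,
    Nat.card_congr (Equiv.subtypeProdEquivSigmaSubtype
      fun x y : {x // minimalPeriod σ x = c} => σ.SameCycle x y), Nat.card_sigma,
    Finset.sum_congr rfl fun x _ => card_sameCycle_of_minimalPeriod_eq σ x, Finset.sum_const,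
    Finset.card_univ, smul_eq_mul, Fintype.card_eq_nat_card, mul_comm]

theorem sum_sq_card_minimalPeriod_eq [Fintype α] [DecidableEq α] {c : ℕ} (hc : 0 < c)
    (hcα : 2 * c ≤ Fintype.card α) :
    ∑ σ : Perm α, Nat.card {x // minimalPeriod σ x = c} ^ 2 =
      (c + 1) * (Fintype.card α).factorial := by
  have : NeZero c := ⟨hc.ne'⟩
  simp_rw [sq_card_minimalPeriod_eq, Finset.sum_add_distrib, ← Finset.mul_sum,
    ← card_semiconj_zmod_sum_embedding, sum_card_minimalPeriod_eq (α := α) hc (by omega)]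
  rw [sum_card_semiconj_embedding _ (by simp [ZMod.card]; omega)]
  ring

end Equiv.Perm

open Equiv.Perm in
theorem cycleCount_pow {N b t : ℕ} (σ : Perm (Fin N)) (ht : 0 < t) (hbt : b ∣ t) :
    (cycleCount (σ ^ b) t : ℚ) = Nat.card {x // minimalPeriod σ x = t * b} / t := by
  simp_rw [cycleCount, card_sameCycle]
  rw [Nat.cast_div (dvd_card_minimalPeriod_eq _ _) (by positivity)]
  simp_rw [minimalPeriod_pow_eq_iff ht hbt]

theorem expected_cycleCount_of_power_general
    (b t N : ℕ) (ht : 1 ≤ t) (hbt : b ∣ t) (hN : 2 * b * t ≤ N) :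
    (∑ σ : Equiv.Perm (Fin N), (cycleCount (σ ^ b) t : ℚ)) /
        (Fintype.card (Equiv.Perm (Fin N))) = 1 / t ∧
    (∑ σ : Equiv.Perm (Fin N), (cycleCount (σ ^ b) t : ℚ) ^ 2) /
        (Fintype.card (Equiv.Perm (Fin N))) = b / t + 1 / t ^ 2 := by
  have hc : 0 < t * b := Nat.mul_pos ht (Nat.pos_of_dvd_of_pos hbt ht)
  have h2c : 2 * (t * b) ≤ Fintype.card (Fin N) := by rw [Fintype.card_fin]; linarith
  have hsum := Equiv.Perm.sum_card_minimalPeriod_eq (α := Fin N) hc (by omega)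
  have hsum_sq := Equiv.Perm.sum_sq_card_minimalPeriod_eq hc h2c
  simp_rw [cycleCount_pow _ ht hbt, div_pow, ← Finset.sum_div, ← Nat.cast_pow, ← Nat.cast_sum,
    hsum, hsum_sq, Fintype.card_perm, Fintype.card_fin]
  have : (t : ℚ) ≠ 0 := by positivity
  constructor
  · field_simp
  · push_cast
    field_simp

/-- Let `b, t ≥ 1` with `b ∣ t` and let `N ≥ 2bt`.  For a uniformly random permutation
`σ ∈ S_N`, the expected number of `t`-cycles of `σ ^ b` is `1/t`, and the expected
value of the square of the number of `t`-cycles of `σ ^ b` is `b/t + 1/t²`. -/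
theorem expected_cycleCount_of_power
    (b t N : ℕ) (hb : 1 ≤ b) (ht : 1 ≤ t) (hbt : b ∣ t) (hN : 2 * b * t ≤ N) :
    (∑ σ : Equiv.Perm (Fin N), (cycleCount (σ ^ b) t : ℚ)) /
        (Fintype.card (Equiv.Perm (Fin N))) = 1 / t ∧
    (∑ σ : Equiv.Perm (Fin N), (cycleCount (σ ^ b) t : ℚ) ^ 2) /
        (Fintype.card (Equiv.Perm (Fin N))) = b / t + 1 / t ^ 2 :=
  expected_cycleCount_of_power_general b t N ht hbt hN
end
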